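/- Let (G/K, Q) be as follows: 𝔭 = 𝔭₁ ⊕ ⋯ ⊕ 𝔭_n an orthogonal direct sum of real inner product spaces of dimensions d₁, …, d_n with respect to an inner product Q. Suppose h : [0,σ] → (0,∞) and f₁,…,f_n : [0,σ] → (0,∞) are smooth, and the metric has diagonal form with scalar second fundamental form data: given τ ∈ [0,σ], define δ_k = −f_k'(τ)/h(τ)·f_k(τ) [i.e., the second fundamental form of the slice r = τ with respect to the inward normal is Σ_k (−f_k(τ) f_k'(τ)/h(τ)) Q|_{𝔭_k}]. Then, assuming the tangential Ricci equations Σ-form and the rr-equation hold at r = τ with prescribed values φ_k(τ), the quantity Σ_{k=1}^n d_k( β_k/(2 f_k(τ)²) + Σ_{l,m} γ_{k,l}^m (f_k(τ)⁴ − 2 f_l(τ)⁴)/(4 f_k(τ)² f_l(τ)² f_m(τ)²) − Σ_l d_l δ_k δ_l/(f_k(τ)² f_l(τ)²)·f_k(τ) f_l(τ) + δ_k²/f_k(τ)² − φ_k(τ)/f_k(τ)² ) equals −1/h(τ)². In particular this quantity is strictly negative. -/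

import Mathlib

/-!
Writing `a = f(τ)`, the expression is `H₁(a, δ) - 1 - H₂(a, φ(τ))`. As `1 - H₁(a, ·)` is a quadratic
form and `δ = -f'(τ)/h(τ)`, we get `1 - H₁(a, δ) = (1 - H₁(a, f'(τ)))/h(τ)²`, and the constraint
`H₁(a, f'(τ)) = h(τ)² H₂(a, φ(τ))` reduces the expression to `-1/h(τ)²`.
-/

open Set

/-- `H₁(x,y) = 1 − Σ_k d_k( Σ_l d_l y_k y_l/(x_k x_l) − y_k²/x_k² )`. -/
noncomputable def H1 (n : ℕ) (d : Fin n → ℕ) (x y : Fin n → ℝ) : ℝ :=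
  1 - ∑ k, (d k : ℝ) *
    ((∑ l, (d l : ℝ) * (y k * y l) / (x k * x l)) - (y k)^2 / (x k)^2)

/-- `H₂(x,z) = Σ_k d_k( z_k/x_k² − β_k/(2x_k²) − Σ_{l,m} γ_{k,l}^m (x_k⁴−2x_l⁴)/(4x_k²x_l²x_m²) )`. -/
noncomputable def H2 (n : ℕ) (d : Fin n → ℕ) (β : Fin n → ℝ)
    (γ : Fin n → Fin n → Fin n → ℝ) (x z : Fin n → ℝ) : ℝ :=
  ∑ k, (d k : ℝ) *
    (z k / (x k)^2 - β k / (2 * (x k)^2) -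
      ∑ l, ∑ m, γ k l m * ((x k)^4 - 2 * (x l)^4) /
        (4 * (x k)^2 * (x l)^2 * (x m)^2))

theorem div_sq_mul_self {K : Type*} [Field K] (a b : K) : a / b ^ 2 * b = a / b := by
  rcases eq_or_ne b 0 with rfl | hb
  · simp
  · field_simp

section

variable {n : ℕ} (d : Fin n → ℕ)

theorem one_sub_H1_eq_sum (x y : Fin n → ℝ) :
    1 - H1 n d x y =
      ∑ k, (d k : ℝ) * ((∑ l, (d l : ℝ) * (y k * y l) / (x k * x l)) - (y k)^2 / (x k)^2) :=
  sub_sub_cancel _ _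

theorem one_sub_H1_const_mul (x y : Fin n → ℝ) (c : ℝ) :
    1 - H1 n d x (fun k => c * y k) = c ^ 2 * (1 - H1 n d x y) := by
  rw [one_sub_H1_eq_sum, one_sub_H1_eq_sum, Finset.mul_sum]
  refine Finset.sum_congr rfl fun k _ => ?_
  have hinner : ∑ l, (d l : ℝ) * (c * y k * (c * y l)) / (x k * x l) =
      c ^ 2 * ∑ l, (d l : ℝ) * (y k * y l) / (x k * x l) := by
    rw [Finset.mul_sum]
    exact Finset.sum_congr rfl fun l _ => by ring
  rw [hinner]
  ring

theorem sum_eq_H1_sub_one_sub_H2 (β : Fin n → ℝ) (γ : Fin n → Fin n → Fin n → ℝ)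
    (x y z : Fin n → ℝ) :
    (∑ k, (d k : ℝ) *
        (β k / (2 * (x k)^2) +
          (∑ l, ∑ m, γ k l m * ((x k)^4 - 2 * (x l)^4) /
            (4 * (x k)^2 * (x l)^2 * (x m)^2)) -
          (∑ l, (d l : ℝ) * (y k * y l) / ((x k)^2 * (x l)^2) * (x k * x l)) +
          (y k)^2 / (x k)^2 - z k / (x k)^2)) =
      H1 n d x y - 1 - H2 n d β γ x z := by
  rw [show H1 n d x y - 1 - H2 n d β γ x z = -(1 - H1 n d x y) - H2 n d β γ x z by ring,
    one_sub_H1_eq_sum, H2, ← Finset.sum_neg_distrib, ← Finset.sum_sub_distrib]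
  refine Finset.sum_congr rfl fun k _ => ?_
  simp only [← mul_pow, div_sq_mul_self]
  ring

end

theorem stmt14_general (n : ℕ) (d : Fin n → ℕ)
    (β : Fin n → ℝ) (γ : Fin n → Fin n → Fin n → ℝ)
    (τ : ℝ)
    (h : ℝ → ℝ) (f f' φ : Fin n → ℝ → ℝ)
    (hh : 0 < h τ)
    (δ : Fin n → ℝ) (hδ : ∀ k, δ k = -(f' k τ) / h τ)
    -- the rr-equation combined with the tangential Ricci equations at `r = τ`:
    (hconstraint : H1 n d (fun k => f k τ) (fun k => f' k τ) =
      (h τ)^2 * H2 n d β γ (fun k => f k τ) (fun k => φ k τ)) :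
    (∑ k, (d k : ℝ) *
        (β k / (2 * (f k τ)^2) +
          (∑ l, ∑ m, γ k l m * ((f k τ)^4 - 2 * (f l τ)^4) /
            (4 * (f k τ)^2 * (f l τ)^2 * (f m τ)^2)) -
          (∑ l, (d l : ℝ) * (δ k * δ l) / ((f k τ)^2 * (f l τ)^2) * (f k τ * f l τ)) +
          (δ k)^2 / (f k τ)^2 - φ k τ / (f k τ)^2)) = -(1 / (h τ)^2) ∧
    (∑ k, (d k : ℝ) *
        (β k / (2 * (f k τ)^2) +
          (∑ l, ∑ m, γ k l m * ((f k τ)^4 - 2 * (f l τ)^4) /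
            (4 * (f k τ)^2 * (f l τ)^2 * (f m τ)^2)) -
          (∑ l, (d l : ℝ) * (δ k * δ l) / ((f k τ)^2 * (f l τ)^2) * (f k τ * f l τ)) +
          (δ k)^2 / (f k τ)^2 - φ k τ / (f k τ)^2)) < 0 := by
  have hδ_eq : δ = fun k => -(h τ)⁻¹ * f' k τ := funext fun k => by rw [hδ k]; ring
  have hH1 : H1 n d (fun k => f k τ) δ =
      1 - (-(h τ)⁻¹) ^ 2 * (1 - H1 n d (fun k => f k τ) (fun k => f' k τ)) := by
    rw [hδ_eq, ← one_sub_H1_const_mul]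
    ring
  have key : H1 n d (fun k => f k τ) δ - 1 - H2 n d β γ (fun k => f k τ) (fun k => φ k τ) =
      -(1 / (h τ)^2) := by
    rw [hH1, hconstraint]
    field_simp
    ring
  rw [sum_eq_H1_sub_one_sub_H2, key]
  exact ⟨rfl, neg_neg_of_pos (by positivity)⟩

theorem stmt14 (n : ℕ) (hn : 1 ≤ n) (d : Fin n → ℕ) (hd : ∀ k, 0 < d k)
    (β : Fin n → ℝ) (γ : Fin n → Fin n → Fin n → ℝ)
    (hβ : ∀ k, 0 ≤ β k) (hγ : ∀ k l m, 0 ≤ γ k l m)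
    (σ : ℝ) (hσ : 0 < σ) (τ : ℝ) (hτ : τ ∈ Icc (0:ℝ) σ)
    (h : ℝ → ℝ) (f f' φ : Fin n → ℝ → ℝ)
    (hh : 0 < h τ) (hf : ∀ k, 0 < f k τ)
    (δ : Fin n → ℝ) (hδ : ∀ k, δ k = -(f' k τ) / h τ)
    -- the rr-equation combined with the tangential Ricci equations at `r = τ`:
    (hconstraint : H1 n d (fun k => f k τ) (fun k => f' k τ) =
      (h τ)^2 * H2 n d β γ (fun k => f k τ) (fun k => φ k τ)) :
    (∑ k, (d k : ℝ) *
        (β k / (2 * (f k τ)^2) +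
          (∑ l, ∑ m, γ k l m * ((f k τ)^4 - 2 * (f l τ)^4) /
            (4 * (f k τ)^2 * (f l τ)^2 * (f m τ)^2)) -
          (∑ l, (d l : ℝ) * (δ k * δ l) / ((f k τ)^2 * (f l τ)^2) * (f k τ * f l τ)) +
          (δ k)^2 / (f k τ)^2 - φ k τ / (f k τ)^2)) = -(1 / (h τ)^2) ∧
    (∑ k, (d k : ℝ) *
        (β k / (2 * (f k τ)^2) +
          (∑ l, ∑ m, γ k l m * ((f k τ)^4 - 2 * (f l τ)^4) /
            (4 * (f k τ)^2 * (f l τ)^2 * (f m τ)^2)) -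
          (∑ l, (d l : ℝ) * (δ k * δ l) / ((f k τ)^2 * (f l τ)^2) * (f k τ * f l τ)) +
          (δ k)^2 / (f k τ)^2 - φ k τ / (f k τ)^2)) < 0 :=
  stmt14_general n d β γ τ h f f' φ hh δ hδ hconstraint
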